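/- Let $c_{26}, c_{27}, c_{28} > 0$ and $\rho \in (0,1)$ satisfy $(1 + c_{26})c_{27} < 1$ and $\rho + \sqrt{2}\, c_{27} < 1$. Let $\Gamma \subseteq \mathbb{R}^d$ and $w: \Gamma \to \mathbb{R}^d$ satisfy: (ii) $|w(x) - w(y)| \le c_{27}|x-y|$ for all $x,y \in \Gamma$; (iii) $c_{28} \le |w(x)| \le \rho$ for all $x \in \Gamma$; (iv) $|w(y)_{\perp(y-x)}| \ge |w(y)|/c_{26}$ whenever $0 < |x-y| \le 2\rho$. Define $f: \Gamma \times [0,1] \to \mathbb{R}^d$ by $f(x,t) = x + t w(x)$. Then there exists a constant $c_{29} > 0$ (depending only on $\rho, c_{26}, c_{27}, c_{28}$) such that $|f(x,t) - f(y,s)| \ge c_{29}(|x-y| + |t-s|)$ for all $x, y \in \Gamma$ and $t, s \in [0,1]$; in particular $f$ is injective and its inverse is Lipschitz continuous. -/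

import Mathlib

/-!
Write `u = x - y` and `σ = t - s`, so that `f(x,t) - f(y,s) = (u + σ w(y)) + t (w(x) - w(y))`,
where the last term has norm at most `c27 |u|`.

If `|u| ≤ 2ρ`, the vector `u + σ w(y)` is long for two reasons: its component orthogonal to `u`
is `σ w(y)_{⊥u}`, of norm at least `|σ| |w(y)| / c26`, and its norm is at least `|u| - |σ| |w(y)|`.
Together they give `|u| ≤ (1 + c26) |u + σ w(y)|`, so the error `c27 |u|` is absorbed because
`(1 + c26) c27 < 1`; the lower bound `|w(y)| ≥ c28` then also controls `|σ|`.

If `|u| > 2ρ`, the displacements cannot cancel `u`: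
`|t w(x) - s w(y)| ≤ |σ| ρ + (1 - |σ|) c27 |u|` is at most a convex combination of `|u|/2` and
`c27 |u|`, and `|σ| ≤ 1` is dominated by `|u| / (2ρ)`.
-/

open scoped InnerProductSpace
noncomputable section

/-- The component of `v` orthogonal to `z`: `v_{⊥z} = v - v_{∥z}`, where `v_{∥z}`
is the orthogonal projection of `v` onto the line `zℝ`. -/
def perp {d : ℕ} (z v : EuclideanSpace ℝ (Fin d)) : EuclideanSpace ℝ (Fin d) :=
  v - (⟪v, z⟫_ℝ / ⟪z, z⟫_ℝ) • z

section Perp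
variable {d : ℕ}

theorem perp_eq_starProjection (z v : EuclideanSpace ℝ (Fin d)) :
    perp z v = (ℝ ∙ z)ᗮ.starProjection v := by
  rw [Submodule.starProjection_orthogonal_val, Submodule.starProjection_singleton, perp,
    real_inner_self_eq_norm_sq, real_inner_comm]
  rfl

theorem perp_neg (z v : EuclideanSpace ℝ (Fin d)) : perp (-z) v = perp z v := by
  simp [perp, neg_div]

theorem norm_perp_le (z v : EuclideanSpace ℝ (Fin d)) : ‖perp z v‖ ≤ ‖v‖ := by
  rw [perp_eq_starProjection]
  exact Submodule.norm_starProjection_apply_le _ v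

theorem perp_add_smul_self (z v : EuclideanSpace ℝ (Fin d)) (c : ℝ) :
    perp z (z + c • v) = c • perp z v := by
  simp [perp_eq_starProjection, Submodule.starProjection_orthogonal_val,
    Submodule.starProjection_eq_self_iff.mpr (Submodule.mem_span_singleton_self z), smul_sub]

theorem abs_mul_norm_perp_le_norm_add_smul (u b : EuclideanSpace ℝ (Fin d)) (σ : ℝ) :
    |σ| * ‖perp u b‖ ≤ ‖u + σ • b‖ := by
  simpa [perp_add_smul_self, norm_smul] using norm_perp_le u (u + σ • b)

theorem norm_le_mul_norm_add_smul {u b : EuclideanSpace ℝ (Fin d)} {c : ℝ} (hc : 0 < c)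
    (hb : ‖b‖ / c ≤ ‖perp u b‖) (σ : ℝ) : ‖u‖ ≤ (1 + c) * ‖u + σ • b‖ := by
  have hσb : |σ| * ‖b‖ ≤ c * ‖u + σ • b‖ := by
    calc |σ| * ‖b‖ ≤ |σ| * (c * ‖perp u b‖) := by
          gcongr; rwa [div_le_iff₀ hc, mul_comm] at hb
      _ = c * (|σ| * ‖perp u b‖) := by ring
      _ ≤ c * ‖u + σ • b‖ := by gcongr; exact abs_mul_norm_perp_le_norm_add_smul u b σ
  have hu : ‖u‖ ≤ ‖u + σ • b‖ + |σ| * ‖b‖ := by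
    simpa [norm_smul] using norm_le_norm_add_norm_sub (u + σ • b) u
  linarith

theorem mul_le_norm_add_smul_sub_smul_of_perp {u a b : EuclideanSpace ℝ (Fin d)}
    {t s c26 c27 c28 : ℝ} (hc26 : 0 < c26) (hc27 : 0 ≤ c27) (hc28 : 0 < c28)
    (hlip : (1 + c26) * c27 ≤ 1)
    (ht : t ∈ Set.Icc (0 : ℝ) 1) (hb : c28 ≤ ‖b‖) (hab : ‖a - b‖ ≤ c27 * ‖u‖)
    (hperp : u ≠ 0 → ‖b‖ / c26 ≤ ‖perp u b‖) :
    (1 - (1 + c26) * c27) * c28 / ((1 + c26) * (1 + c28)) * (‖u‖ + |t - s|) ≤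
      ‖u + (t • a - s • b)‖ := by
  set K := 1 + c26
  set v := u + (t - s) • b
  have hq : c28 ≤ K * ‖perp u b‖ ∧ ‖u‖ ≤ K * ‖v‖ := by
    rcases eq_or_ne u 0 with rfl | hu
    · have hbperp : perp 0 b = b := by simp [perp]
      constructor
      · rw [hbperp]
        exact hb.trans (le_mul_of_one_le_left (norm_nonneg b) (by linarith))
      · simp only [norm_zero]; positivity
    · have hqb := hperp hu
      constructor
      · rw [div_le_iff₀ hc26, mul_comm] at hqb
        exact hb.trans (hqb.trans (by gcongr; linarith))
      · exact norm_le_mul_norm_add_smul hc26 hqb _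
  have hτ : c28 * |t - s| ≤ K * ‖v‖ :=
    calc c28 * |t - s| ≤ K * ‖perp u b‖ * |t - s| := by gcongr; exact hq.1
      _ = K * (|t - s| * ‖perp u b‖) := by ring
      _ ≤ K * ‖v‖ := by gcongr; exact abs_mul_norm_perp_le_norm_add_smul u b _
  have he : ‖t • (a - b)‖ ≤ c27 * ‖u‖ := by
    rw [norm_smul, Real.norm_of_nonneg ht.1]
    exact (mul_le_of_le_one_left (norm_nonneg _) ht.2).trans hab
  have hv : (1 - K * c27) * ‖v‖ ≤ ‖u + (t • a - s • b)‖ := by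
    have hsplit : u + (t • a - s • b) = v + t • (a - b) := by simp only [v]; module
    have := norm_le_norm_add_norm_sub (v + t • (a - b)) v
    rw [add_sub_cancel_left, ← hsplit] at this
    linarith [mul_le_mul_of_nonneg_left hq.2 hc27]
  have hsum : c28 * (‖u‖ + |t - s|) ≤ K * (1 + c28) * ‖v‖ := by
    linarith [mul_le_mul_of_nonneg_left hq.2 hc28.le]
  rw [div_mul_eq_mul_div, div_le_iff₀ (by positivity)]
  nlinarith [mul_le_mul_of_nonneg_left hsum (by linarith : 0 ≤ 1 - K * c27),
    mul_le_mul_of_nonneg_right hv (by positivity : 0 ≤ K * (1 + c28))]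

end Perp

section Normed
variable {E : Type*} [NormedAddCommGroup E]

theorem eq_and_eq_of_mul_add_nonpos {x y : E} {t s c : ℝ} (hc : 0 < c)
    (h : c * (‖x - y‖ + |t - s|) ≤ 0) : x = y ∧ t = s := by
  have h0 := nonpos_of_mul_nonpos_right h hc
  exact ⟨sub_eq_zero.1 (norm_le_zero_iff.1 (by linarith [abs_nonneg (t - s)])),
    sub_eq_zero.1 (abs_nonpos_iff.1 (by linarith [norm_nonneg (x - y)]))⟩

variable [NormedSpace ℝ E]

theorem norm_smul_sub_smul_le {a b : E} {ρ t s : ℝ} (ha : ‖a‖ ≤ ρ) (hb : ‖b‖ ≤ ρ)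
    (ht : t ∈ Set.Icc (0 : ℝ) 1) (hs : s ∈ Set.Icc (0 : ℝ) 1) :
    ‖t • a - s • b‖ ≤ |t - s| * ρ + (1 - |t - s|) * ‖a - b‖ := by
  wlog hst : s ≤ t generalizing a b t s
  · simpa only [norm_sub_rev, abs_sub_comm] using this hb ha hs ht (le_of_not_ge hst)
  rw [abs_of_nonneg (sub_nonneg.2 hst)]
  calc ‖t • a - s • b‖ = ‖(t - s) • a + s • (a - b)‖ := by congr 1; module
    _ ≤ (t - s) * ‖a‖ + s * ‖a - b‖ := by
      refine (norm_add_le _ _).trans_eq ?_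
      rw [norm_smul, norm_smul, Real.norm_of_nonneg (sub_nonneg.2 hst),
        Real.norm_of_nonneg hs.1]
    _ ≤ (t - s) * ρ + (1 - (t - s)) * ‖a - b‖ := by
      gcongr
      linarith [ht.2]

theorem mul_le_norm_add_smul_sub_smul_of_lt_norm {u a b : E} {ρ c27 t s : ℝ} (hρ : 0 < ρ)
    (hc27 : c27 ≤ 1) (ha : ‖a‖ ≤ ρ) (hb : ‖b‖ ≤ ρ) (ht : t ∈ Set.Icc (0 : ℝ) 1)
    (hs : s ∈ Set.Icc (0 : ℝ) 1) (hab : ‖a - b‖ ≤ c27 * ‖u‖) (hfar : 2 * ρ < ‖u‖) :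
    min (1 / 2) (1 - c27) * (2 * ρ / (2 * ρ + 1)) * (‖u‖ + |t - s|) ≤
      ‖u + (t • a - s • b)‖ := by
  set m := min (1 / 2 : ℝ) (1 - c27)
  set τ := |t - s|
  have hτ : τ ≤ 1 := abs_sub_le_of_nonneg_of_le ht.1 ht.2 hs.1 hs.2
  have hm : 0 ≤ m := le_min (by norm_num) (by linarith)
  have hmu : m * ‖u‖ ≤ ‖u + (t • a - s • b)‖ := by
    have hD := norm_le_norm_add_norm_sub (u + (t • a - s • b)) u
    rw [add_sub_cancel_left] at hD
    have hta := norm_smul_sub_smul_le ha hb ht hs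
    have hconv : m ≤ τ * (1 / 2) + (1 - τ) * (1 - c27) := by
      nlinarith [min_le_left (1 / 2 : ℝ) (1 - c27), min_le_right (1 / 2 : ℝ) (1 - c27),
        abs_nonneg (t - s)]
    nlinarith [mul_le_mul_of_nonneg_left hab (by linarith : 0 ≤ 1 - τ),
      mul_le_mul_of_nonneg_left hfar.le (abs_nonneg (t - s)), norm_nonneg u]
  calc m * (2 * ρ / (2 * ρ + 1)) * (‖u‖ + τ) ≤ m * ‖u‖ := by
        rw [mul_assoc]
        gcongr
        rw [div_mul_eq_mul_div, div_le_iff₀ (by positivity)]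
        nlinarith [abs_nonneg (t - s)]
    _ ≤ _ := hmu

end Normed

theorem stmt5_general (ρ c26 c27 c28 : ℝ)
    (hρ : ρ ∈ Set.Ioo (0 : ℝ) 1) (hc26 : 0 < c26) (hc27 : 0 < c27) (hc28 : 0 < c28)
    (hlip : (1 + c26) * c27 < 1) :
    ∃ c29 > 0, ∀ (d : ℕ) (Γ : Set (EuclideanSpace ℝ (Fin d)))
      (w : EuclideanSpace ℝ (Fin d) → EuclideanSpace ℝ (Fin d)),
      (∀ x ∈ Γ, ∀ y ∈ Γ, ‖w x - w y‖ ≤ c27 * ‖x - y‖) →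
      (∀ x ∈ Γ, c28 ≤ ‖w x‖ ∧ ‖w x‖ ≤ ρ) →
      (∀ x ∈ Γ, ∀ y ∈ Γ, 0 < ‖x - y‖ → ‖x - y‖ ≤ 2 * ρ →
        ‖w y‖ / c26 ≤ ‖perp (y - x) (w y)‖) →
      ∀ x ∈ Γ, ∀ y ∈ Γ, ∀ t ∈ Set.Icc (0 : ℝ) 1, ∀ s ∈ Set.Icc (0 : ℝ) 1,
        c29 * (‖x - y‖ + |t - s|) ≤ ‖(x + t • w x) - (y + s • w y)‖ ∧
        (x + t • w x = y + s • w y → x = y ∧ t = s) := by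
  have hc27' : c27 < 1 := by nlinarith
  obtain ⟨c29, hc29, hc29_near, hc29_far⟩ : ∃ c29 > 0,
      c29 ≤ (1 - (1 + c26) * c27) * c28 / ((1 + c26) * (1 + c28)) ∧
      c29 ≤ min (1 / 2) (1 - c27) * (2 * ρ / (2 * ρ + 1)) :=
    ⟨_, lt_min (div_pos (mul_pos (by linarith) hc28) (by positivity))
      (mul_pos (lt_min (by norm_num) (by linarith)) (by have := hρ.1; positivity)),
      min_le_left _ _, min_le_right _ _⟩
  refine ⟨c29, hc29, ?_⟩
  intro d Γ w hw hwρ hperp x hx y hy t ht s hs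
  have hbound : c29 * (‖x - y‖ + |t - s|) ≤ ‖(x + t • w x) - (y + s • w y)‖ := by
    rw [show (x + t • w x) - (y + s • w y) = (x - y) + (t • w x - s • w y) by abel]
    rcases le_or_gt ‖x - y‖ (2 * ρ) with hnear | hfar
    · refine (mul_le_mul_of_nonneg_right hc29_near (by positivity)).trans ?_
      refine mul_le_norm_add_smul_sub_smul_of_perp hc26 hc27.le hc28 hlip.le ht (hwρ y hy).1
        (hw x hx y hy) fun hxy => ?_
      rw [← perp_neg, neg_sub]
      exact hperp x hx y hy (norm_pos_iff.2 hxy) hnear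
    · refine (mul_le_mul_of_nonneg_right hc29_far (by positivity)).trans ?_
      exact mul_le_norm_add_smul_sub_smul_of_lt_norm hρ.1 hc27'.le (hwρ x hx).2 (hwρ y hy).2 ht hs
        (hw x hx y hy) hfar
  exact ⟨hbound, fun h => eq_and_eq_of_mul_add_nonpos hc29 (by simpa [h] using hbound)⟩

/-- reverse Lipschitz bound for the tube map `f(x,t) = x + t w(x)`. -/
theorem stmt5 (ρ c26 c27 c28 : ℝ)
    (hρ : ρ ∈ Set.Ioo (0 : ℝ) 1) (hc26 : 0 < c26) (hc27 : 0 < c27) (hc28 : 0 < c28)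
    (hlip : (1 + c26) * c27 < 1) (hsum : ρ + Real.sqrt 2 * c27 < 1) :
    ∃ c29 > 0, ∀ (d : ℕ) (Γ : Set (EuclideanSpace ℝ (Fin d)))
      (w : EuclideanSpace ℝ (Fin d) → EuclideanSpace ℝ (Fin d)),
      (∀ x ∈ Γ, ∀ y ∈ Γ, ‖w x - w y‖ ≤ c27 * ‖x - y‖) →
      (∀ x ∈ Γ, c28 ≤ ‖w x‖ ∧ ‖w x‖ ≤ ρ) →
      (∀ x ∈ Γ, ∀ y ∈ Γ, 0 < ‖x - y‖ → ‖x - y‖ ≤ 2 * ρ →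
        ‖w y‖ / c26 ≤ ‖perp (y - x) (w y)‖) →
      ∀ x ∈ Γ, ∀ y ∈ Γ, ∀ t ∈ Set.Icc (0 : ℝ) 1, ∀ s ∈ Set.Icc (0 : ℝ) 1,
        c29 * (‖x - y‖ + |t - s|) ≤ ‖(x + t • w x) - (y + s • w y)‖ ∧
        (x + t • w x = y + s • w y → x = y ∧ t = s) :=
  stmt5_general ρ c26 c27 c28 hρ hc26 hc27 hc28 hlip
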